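/- Let n, p be positive integers, δ > 0, S̄ ⊆ {1,…,p}, x_1,…,x_n ∈ ℝ^p, and Δ, w̃, β ∈ ℝ^p with supp(Δ) ⊆ S̄, supp(w̃) ⊆ S̄ and supp(β) ⊆ S̄. If the operator norm bound ‖ (1/n) Σ_{j=1}^n (x_jᵀΔ)² x_{j,S̄} x_{j,S̄}ᵀ − (‖Δ‖₂² I_{S̄} + 2ΔΔᵀ) ‖ ≤ δ‖Δ‖₂² holds, then | (3/n) Σ_{j=1}^n (x_jᵀΔ)² (x_jᵀ w̃)(x_jᵀβ) | ≤ 9 ‖Δ‖₂² ‖w̃‖₂ ‖β‖₂ + 3δ ‖Δ‖₂² ‖w̃‖₂ ‖β‖₂. -/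

import Mathlib

open MeasureTheory ProbabilityTheory

noncomputable section

/-- Euclidean dot product on `ℝ^p`. -/
def dot {p : ℕ} (u v : Fin p → ℝ) : ℝ := ∑ i, u i * v i

/-- Euclidean norm on `ℝ^p`. -/
def nrm {p : ℕ} (v : Fin p → ℝ) : ℝ := Real.sqrt (∑ i, (v i)^2)

/-- The matrix `‖b‖₂² I + 2 b bᵀ` (population Fisher information / Hessian). -/
def fisherM {p : ℕ} (b : Fin p → ℝ) : Matrix (Fin p) (Fin p) ℝ :=
  (nrm b ^ 2) • (1 : Matrix (Fin p) (Fin p) ℝ) + (2:ℝ) • Matrix.vecMulVec b b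

/-- The correction direction `w_k(b) = -(1/2) (‖b‖₂² I + 2 b bᵀ)⁻¹ e_k`. -/
def wvec {p : ℕ} (b : Fin p → ℝ) (k : Fin p) : Fin p → ℝ :=
  (-(1/2) : ℝ) • (fisherM b)⁻¹.mulVec (Pi.single k 1)

/-- Operator (spectral) norm of a matrix acting on Euclidean space. -/
def opNorm {p : ℕ} (A : Matrix (Fin p) (Fin p) ℝ) : ℝ :=
  ‖LinearMap.toContinuousLinearMap (Matrix.toEuclideanLin A)‖

/-- Restriction of a vector to a coordinate set `S` (zero outside `S`). -/
def restr {p : ℕ} (S : Finset (Fin p)) (v : Fin p → ℝ) : Fin p → ℝ :=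
  fun i => if i ∈ S then v i else 0

/-- Gradient of the phase-retrieval objective
`f(b) = (1/(4n)) ∑ⱼ ((xⱼᵀb)² - yⱼ)²`, namely
`∇f(b) = (1/n) ∑ⱼ ((xⱼᵀb)² - yⱼ)(xⱼᵀb) xⱼ`. -/
def gradf {p n : ℕ} (x : Fin n → Fin p → ℝ) (y : Fin n → ℝ) (b : Fin p → ℝ) : Fin p → ℝ :=
  (1/(n:ℝ)) • ∑ j, (((dot (x j) b)^2 - y j) * dot (x j) b) • x j

/-! Since `w̃` and `β` live on `S̄`, the sum is `3 w̃ᵀ A β` for the empirical matrix `A` of the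
hypothesis, and the restriction to `S̄` is invisible. Split `A = M + (A - M)` with
`M = ‖Δ‖² I_S̄ + 2ΔΔᵀ`: by Cauchy–Schwarz `|w̃ᵀ M β| ≤ 3‖Δ‖²‖w̃‖‖β‖`, and the operator-norm bound
gives `|w̃ᵀ (A - M) β| ≤ δ‖Δ‖²‖w̃‖‖β‖`. -/

open Matrix

lemma dot_eq_dotProduct {p : ℕ} (u v : Fin p → ℝ) : dot u v = u ⬝ᵥ v := rfl

lemma dot_eq_inner {p : ℕ} (u v : Fin p → ℝ) :
    dot u v = inner ℝ (WithLp.toLp 2 u) (WithLp.toLp 2 v) := by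
  simp [dot, PiLp.inner_apply, mul_comm]

lemma nrm_eq_norm {p : ℕ} (v : Fin p → ℝ) : nrm v = ‖WithLp.toLp 2 v‖ := by
  simp [nrm, EuclideanSpace.norm_eq, sq_abs]

lemma nrm_nonneg {p : ℕ} (v : Fin p → ℝ) : 0 ≤ nrm v := Real.sqrt_nonneg _

lemma abs_dot_le {p : ℕ} (u v : Fin p → ℝ) : |dot u v| ≤ nrm u * nrm v := by
  rw [dot_eq_inner, nrm_eq_norm, nrm_eq_norm]
  exact abs_real_inner_le_norm _ _

lemma nrm_mulVec_le {p : ℕ} (A : Matrix (Fin p) (Fin p) ℝ) (v : Fin p → ℝ) :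
    nrm (A *ᵥ v) ≤ opNorm A * nrm v := by
  rw [nrm_eq_norm, nrm_eq_norm]
  exact (LinearMap.toContinuousLinearMap (toEuclideanLin A)).le_opNorm (WithLp.toLp 2 v)

lemma abs_dot_mulVec_le {p : ℕ} (A : Matrix (Fin p) (Fin p) ℝ) (u v : Fin p → ℝ) :
    |dot u (A *ᵥ v)| ≤ opNorm A * nrm u * nrm v :=
  calc |dot u (A *ᵥ v)| ≤ nrm u * nrm (A *ᵥ v) := abs_dot_le _ _
    _ ≤ nrm u * (opNorm A * nrm v) := by gcongr; exacts [nrm_nonneg _, nrm_mulVec_le A v]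
    _ = opNorm A * nrm u * nrm v := by ring

lemma abs_dot_mulVec_le_add_opNorm_sub {p : ℕ} (A M : Matrix (Fin p) (Fin p) ℝ)
    (u v : Fin p → ℝ) :
    |dot u (A *ᵥ v)| ≤ |dot u (M *ᵥ v)| + opNorm (A - M) * nrm u * nrm v := by
  have hsplit : dot u (A *ᵥ v) = dot u (M *ᵥ v) + dot u ((A - M) *ᵥ v) := by
    simp only [dot_eq_dotProduct, sub_mulVec, dotProduct_sub]
    ring
  rw [hsplit]
  exact (abs_add_le _ _).trans (add_le_add le_rfl (abs_dot_mulVec_le _ u v))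

section Restriction

variable {p : ℕ} {S : Finset (Fin p)}

lemma restr_eq_self (v : Fin p → ℝ) (hv : Function.support v ⊆ (S : Set (Fin p))) :
    restr S v = v := by
  ext i
  by_cases hi : i ∈ S
  · simp [restr, hi]
  · simp [restr, hi, Function.notMem_support.mp fun h => hi (hv h)]

lemma dot_restr_left (u w : Fin p → ℝ) : dot (restr S u) w = dot u (restr S w) := by
  unfold dot restr
  refine Finset.sum_congr rfl fun i _ => ?_
  split_ifs <;> simp

lemma diagonal_indicator_mulVec (v : Fin p → ℝ) :
    diagonal (fun i => if i ∈ S then (1 : ℝ) else 0) *ᵥ v = restr S v := by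
  ext i
  simp [mulVec_diagonal, restr]

lemma dot_mulVec_empirical {n : ℕ} (x : Fin n → Fin p → ℝ) (c : Fin n → ℝ)
    (w v : Fin p → ℝ) (hw : Function.support w ⊆ (S : Set (Fin p)))
    (hv : Function.support v ⊆ (S : Set (Fin p))) :
    dot w (((1 / (n : ℝ)) • ∑ j, c j • vecMulVec (restr S (x j)) (restr S (x j))) *ᵥ v)
      = (1 / (n : ℝ)) * ∑ j, c j * dot (x j) w * dot (x j) v := by
  have hrestr (j : Fin n) (u : Fin p → ℝ) (hu : Function.support u ⊆ (S : Set (Fin p))) :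
      restr S (x j) ⬝ᵥ u = x j ⬝ᵥ u := by
    rw [← dot_eq_dotProduct, dot_restr_left, restr_eq_self u hu, dot_eq_dotProduct]
  simp only [dot_eq_dotProduct, smul_mulVec, sum_mulVec, dotProduct_smul, dotProduct_sum,
    vecMulVec_mulVec, op_smul_eq_smul, smul_eq_mul, Finset.mul_sum]
  refine Finset.sum_congr rfl fun j _ => ?_
  rw [dotProduct_comm w, hrestr j w hw, hrestr j v hv]
  ring

lemma dot_mulVec_population (t s : ℝ) (a w v : Fin p → ℝ)
    (hv : Function.support v ⊆ (S : Set (Fin p))) :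
    dot w ((t • diagonal (fun i => if i ∈ S then (1 : ℝ) else 0) + s • vecMulVec a a) *ᵥ v)
      = t * dot w v + s * (dot w a * dot a v) := by
  simp only [dot_eq_dotProduct, add_mulVec, smul_mulVec, diagonal_indicator_mulVec,
    restr_eq_self v hv, vecMulVec_mulVec, op_smul_eq_smul, dotProduct_add, dotProduct_smul,
    smul_eq_mul]
  ring

lemma abs_dot_mulVec_population_le (a w v : Fin p → ℝ)
    (hv : Function.support v ⊆ (S : Set (Fin p))) :
    |dot w ((nrm a ^ 2 • diagonal (fun i => if i ∈ S then (1 : ℝ) else 0)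
      + (2 : ℝ) • vecMulVec a a) *ᵥ v)| ≤ 3 * nrm a ^ 2 * nrm w * nrm v := by
  rw [dot_mulVec_population _ _ a w v hv]
  calc |nrm a ^ 2 * dot w v + 2 * (dot w a * dot a v)|
      ≤ nrm a ^ 2 * |dot w v| + 2 * (|dot w a| * |dot a v|) := by
        refine (abs_add_le _ _).trans_eq ?_
        rw [abs_mul, abs_mul, abs_mul, abs_two, abs_of_nonneg (sq_nonneg _)]
    _ ≤ nrm a ^ 2 * (nrm w * nrm v) + 2 * ((nrm w * nrm a) * (nrm a * nrm v)) := by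
        gcongr
        · exact abs_dot_le w v
        · exact mul_nonneg (nrm_nonneg w) (nrm_nonneg a)
        · exact abs_dot_le w a
        · exact abs_dot_le a v
    _ = 3 * nrm a ^ 2 * nrm w * nrm v := by ring

end Restriction

theorem stmt_14_general {n p : ℕ} (δ : ℝ) (Sb : Finset (Fin p))
    (x : Fin n → Fin p → ℝ) (Δ wt β : Fin p → ℝ)
    (hwS : Function.support wt ⊆ (Sb : Set (Fin p)))
    (hβS : Function.support β ⊆ (Sb : Set (Fin p)))
    (hop : opNorm ((1/(n:ℝ)) • ∑ j, (dot (x j) Δ ^ 2) •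
          Matrix.vecMulVec (restr Sb (x j)) (restr Sb (x j))
        - ((nrm Δ ^ 2) • Matrix.diagonal (fun i => if i ∈ Sb then (1:ℝ) else 0)
            + (2:ℝ) • Matrix.vecMulVec Δ Δ))
      ≤ δ * nrm Δ ^ 2) :
    |(3/(n:ℝ)) * ∑ j, dot (x j) Δ ^ 2 * dot (x j) wt * dot (x j) β|
      ≤ 9 * nrm Δ ^ 2 * nrm wt * nrm β + 3 * δ * nrm Δ ^ 2 * nrm wt * nrm β := by
  set A : Matrix (Fin p) (Fin p) ℝ := (1/(n:ℝ)) • ∑ j, (dot (x j) Δ ^ 2) •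
      vecMulVec (restr Sb (x j)) (restr Sb (x j))
  set M : Matrix (Fin p) (Fin p) ℝ := (nrm Δ ^ 2) •
      diagonal (fun i => if i ∈ Sb then (1:ℝ) else 0) + (2:ℝ) • vecMulVec Δ Δ
  have hA : (3/(n:ℝ)) * ∑ j, dot (x j) Δ ^ 2 * dot (x j) wt * dot (x j) β
      = 3 * dot wt (A *ᵥ β) := by
    rw [dot_mulVec_empirical x _ wt β hwS hβS]
    ring
  have hsplit := abs_dot_mulVec_le_add_opNorm_sub A M wt β
  have hM : |dot wt (M *ᵥ β)| ≤ 3 * nrm Δ ^ 2 * nrm wt * nrm β :=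
    abs_dot_mulVec_population_le Δ wt β hβS
  have hE : opNorm (A - M) * nrm wt * nrm β ≤ δ * nrm Δ ^ 2 * nrm wt * nrm β := by
    gcongr
    exacts [nrm_nonneg β, nrm_nonneg wt]
  rw [hA, abs_mul, abs_of_pos three_pos]
  linarith

/-- Deterministic bound on the quadratic error term, conditional on the
empirical-Hessian concentration event for `Δ`:
`|(3/n) ∑ⱼ (xⱼᵀΔ)²(xⱼᵀw̃)(xⱼᵀβ)| ≤ 9‖Δ‖₂²‖w̃‖₂‖β‖₂ + 3δ‖Δ‖₂²‖w̃‖₂‖β‖₂`. -/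
theorem stmt_14 {n p : ℕ} (hn : 0 < n) (δ : ℝ) (hδ : 0 < δ) (Sb : Finset (Fin p))
    (x : Fin n → Fin p → ℝ) (Δ wt β : Fin p → ℝ)
    (hΔS : Function.support Δ ⊆ (Sb : Set (Fin p)))
    (hwS : Function.support wt ⊆ (Sb : Set (Fin p)))
    (hβS : Function.support β ⊆ (Sb : Set (Fin p)))
    (hop : opNorm ((1/(n:ℝ)) • ∑ j, (dot (x j) Δ ^ 2) •
          Matrix.vecMulVec (restr Sb (x j)) (restr Sb (x j))
        - ((nrm Δ ^ 2) • Matrix.diagonal (fun i => if i ∈ Sb then (1:ℝ) else 0)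
            + (2:ℝ) • Matrix.vecMulVec Δ Δ))
      ≤ δ * nrm Δ ^ 2) :
    |(3/(n:ℝ)) * ∑ j, dot (x j) Δ ^ 2 * dot (x j) wt * dot (x j) β|
      ≤ 9 * nrm Δ ^ 2 * nrm wt * nrm β + 3 * δ * nrm Δ ^ 2 * nrm wt * nrm β :=
  stmt_14_general δ Sb x Δ wt β hwS hβS hop
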